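/- The Brown graph B(q) for an odd prime power q has exactly q² + q + 1 vertices, every non-quadric vertex has degree q+1, and B(q) is C4-free. -/

import Mathlib

/-- `G` contains no cycle of length 4 as a (not necessarily induced) subgraph. -/
def C4Free {V : Type*} (G : SimpleGraph V) : Prop :=
  ¬ ∃ a b c d : V, a ≠ b ∧ a ≠ c ∧ a ≠ d ∧ b ≠ c ∧ b ≠ d ∧ c ≠ d ∧
    G.Adj a b ∧ G.Adj b c ∧ G.Adj c d ∧ G.Adj d a

/-- `G` has edge-connectivity at least `k`: it stays connected after
deleting any set of fewer than `k` edges. -/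
def EdgeConnAtLeast {V : Type*} (G : SimpleGraph V) (k : ℕ) : Prop :=
  ∀ s : Finset (Sym2 V), s.card < k → (G.deleteEdges ↑s).Connected

/-- The Brown graph on the projective plane over `F`: vertices are classes of
nonzero vectors of `F³`, adjacency is orthogonality of representatives. -/
def brown (F : Type*) [Field F] : SimpleGraph (Projectivization F (Fin 3 → F)) where
  Adj x y := x ≠ y ∧ ∑ i, x.rep i * y.rep i = 0
  symm := ⟨fun x y h => ⟨h.1.symm, by
    rw [← h.2]; exact Finset.sum_congr rfl fun i _ => mul_comm _ _⟩⟩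
  loopless := ⟨fun x h => h.1 rfl⟩

/-- A vertex of the Brown graph is quadric if its representatives are self-orthogonal. -/
def IsQuadric {F : Type*} [Field F] (x : Projectivization F (Fin 3 → F)) : Prop :=
  ∑ i, x.rep i * x.rep i = 0

/-!
A point `y` is adjacent to `x` exactly when `y.rep` lies in the kernel of `v ↦ x.rep ⬝ᵥ v`, so
the neighbours of a non-quadric `x` are the `q + 1` points of a projective line, while the
common neighbours of distinct `a`, `c` lie in the projectivization of a one-dimensional space,
so there is at most one of them; a 4-cycle `a b c d` would have two. All three counts come from
`|ℙ(W)| = 1 + q + ⋯ + q ^ (dim W - 1)`.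
-/

open Module Projectivization
open scoped LinearAlgebra.Projectivization

theorem Matrix.finrank_ker_mulVecLin_of_linearIndependent_row {K m n : Type*} [Field K]
    [Fintype m] [Fintype n] {A : Matrix m n K} (hA : LinearIndependent K A.row) :
    finrank K (LinearMap.ker A.mulVecLin) = Fintype.card n - Fintype.card m := by
  have h := LinearMap.finrank_range_add_finrank_ker A.mulVecLin
  rw [← Matrix.rank, hA.rank_matrix, finrank_fintype_fun_eq_card] at h
  omega

namespace Projectivization

variable {K V : Type*} [Field K] [AddCommGroup V] [Module K V]

theorem range_map_subtype (W : Submodule K V) :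
    Set.range (map W.subtype W.injective_subtype) = {x : ℙ K V | x.rep ∈ W} := by
  ext x
  constructor
  · rintro ⟨y, rfl⟩
    induction y using Projectivization.ind with | h w hw =>
    obtain ⟨a, ha⟩ := exists_smul_eq_mk_rep K (w : V) (by simpa using hw)
    rw [Set.mem_ofPred_eq, map_mk]
    exact ha ▸ W.smul_of_tower_mem a w.2
  · intro hx
    refine ⟨mk K ⟨x.rep, hx⟩ (by simpa using x.rep_nonzero), ?_⟩
    rw [map_mk]
    exact mk_rep x

theorem ncard_setOf_rep_mem [Finite K] (W : Submodule K V) :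
    {x : ℙ K V | x.rep ∈ W}.ncard = ∑ i ∈ Finset.range (finrank K W), Nat.card K ^ i := by
  rw [← range_map_subtype, Set.ncard_range_of_injective (map_injective _ _),
    card_of_finrank K W rfl]

theorem ncard_setOf_forall_dotProduct_rep_eq_zero {K m n : Type*} [Field K]
    [Finite K] [Fintype m] [Fintype n] {r : m → n → K} (hr : LinearIndependent K r) :
    {x : ℙ K (n → K) | ∀ i, r i ⬝ᵥ x.rep = 0}.ncard
      = ∑ i ∈ Finset.range (Fintype.card n - Fintype.card m), Nat.card K ^ i := by
  have hker : {x : ℙ K (n → K) | ∀ i, r i ⬝ᵥ x.rep = 0}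
      = {x | x.rep ∈ LinearMap.ker (Matrix.of r).mulVecLin} := by
    ext x
    simp [funext_iff, Matrix.mulVec]
  rw [hker, ncard_setOf_rep_mem,
    Matrix.finrank_ker_mulVecLin_of_linearIndependent_row (A := Matrix.of r) hr]

end Projectivization

theorem c4Free_of_commonNeighbors_subsingleton {V : Type*} {G : SimpleGraph V}
    (h : ∀ a c, a ≠ c → (G.commonNeighbors a c).Subsingleton) : C4Free G := by
  rintro ⟨a, b, c, d, -, hac, -, -, hbd, -, hab, hbc, hcd, hda⟩
  exact hbd (h a c hac ⟨hab, hbc.symm⟩ ⟨hda.symm, hcd⟩)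

section Brown

variable {F : Type*} [Field F]

theorem brown_adj_iff {x y : ℙ F (Fin 3 → F)} :
    (brown F).Adj x y ↔ x ≠ y ∧ x.rep ⬝ᵥ y.rep = 0 :=
  Iff.rfl

theorem brown_neighborSet_of_not_isQuadric {x : ℙ F (Fin 3 → F)} (hx : ¬ IsQuadric x) :
    (brown F).neighborSet x = {y | ∀ i, ![x.rep] i ⬝ᵥ y.rep = 0} := by
  ext y
  simp only [SimpleGraph.mem_neighborSet, brown_adj_iff, Set.mem_ofPred_eq, Fin.forall_fin_one,
    Matrix.cons_val_zero, and_iff_right_iff_imp]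
  rintro h rfl
  exact hx h

theorem brown_commonNeighbors_subset (a c : ℙ F (Fin 3 → F)) :
    (brown F).commonNeighbors a c ⊆ {y | ∀ i, ![a.rep, c.rep] i ⬝ᵥ y.rep = 0} := by
  rintro y ⟨hay, hcy⟩
  simp only [Set.mem_ofPred_eq, Fin.forall_fin_two, Matrix.cons_val_zero, Matrix.cons_val_one]
  exact ⟨hay.2, hcy.2⟩

variable [Finite F]

theorem brown_commonNeighbors_subsingleton {a c : ℙ F (Fin 3 → F)} (hac : a ≠ c) :
    ((brown F).commonNeighbors a c).Subsingleton := by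
  have hcard := ncard_setOf_forall_dotProduct_rep_eq_zero (linearIndependent_pair_iff_ne.mpr hac)
  rw [Fintype.card_fin, Fintype.card_fin, Finset.sum_range_one, pow_zero] at hcard
  exact (Set.ncard_le_one_iff_subsingleton.mp hcard.le).anti (brown_commonNeighbors_subset a c)

end Brown

theorem brown_order_degree_c4free_general (F : Type*) [Field F] [Fintype F] :
    Nat.card (Projectivization F (Fin 3 → F))
        = Fintype.card F ^ 2 + Fintype.card F + 1 ∧
    (∀ x : Projectivization F (Fin 3 → F), ¬ IsQuadric x →
        ((brown F).neighborSet x).ncard = Fintype.card F + 1) ∧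
    C4Free (brown F) := by
  refine ⟨?_, fun x hx => ?_, c4Free_of_commonNeighbors_subsingleton
    fun a c => brown_commonNeighbors_subsingleton⟩
  · rw [card_of_finrank F (Fin 3 → F) (finrank_fin_fun F), Nat.card_eq_fintype_card]
    simp only [Finset.sum_range_succ, Finset.sum_range_zero]
    ring
  · rw [brown_neighborSet_of_not_isQuadric hx, ncard_setOf_forall_dotProduct_rep_eq_zero
      ((linearIndependent_unique_iff (v := ![x.rep])).mpr x.rep_nonzero), Nat.card_eq_fintype_card]
    simp only [Fintype.card_fin, Finset.sum_range_succ, Finset.sum_range_zero]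
    ring

theorem brown_order_degree_c4free (F : Type*) [Field F] [Fintype F]
    (hodd : Odd (Fintype.card F)) :
    Nat.card (Projectivization F (Fin 3 → F))
        = Fintype.card F ^ 2 + Fintype.card F + 1 ∧
    (∀ x : Projectivization F (Fin 3 → F), ¬ IsQuadric x →
        ((brown F).neighborSet x).ncard = Fintype.card F + 1) ∧
    C4Free (brown F) :=
  brown_order_degree_c4free_general F
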